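/- Full double robustness of AIPW: define τ̂(μ₁, μ₀, ê) = E[μ₁(X) − μ₀(X)] + E[Z(Y − μ₁(X))/ê(X)] − E[(1−Z)(Y − μ₀(X))/(1−ê(X))]. If either (i) ê = e (the true propensity) with 0 < e(x) < 1, or (ii) μ₁(x) = E[Y(1)|X=x] and μ₀(x) = E[Y(0)|X=x] for all x in the support, then τ̂(μ₁, μ₀, ê) = E[Y(1) − Y(0)], assuming ignorability and 0 < ê(x) < 1 on the support. -/

import Mathlib

/-!
Both sides split as sums over the strata `X = x`. On a stratum of positive mass `p`, ignorability
says that the treated arm (mass `q₁`) sees the same average of `Y(1)` as the whole stratum: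
`E[Y(1); Z = 1, X = x] · p = E[Y(1); X = x] · q₁`, and likewise for the control arm. Hence the
inverse-weighted residual of an arm equals `E[Y(1); X = x] - μ₁(x) p` as soon as either the weight
is `q₁ / p` or `μ₁(x)` is the stratum mean, where it vanishes; this cancels the `μ₁(x) p` coming
from the outcome-model term. Null strata contribute nothing to either side.
-/

open scoped Classical
open Finset

noncomputable def pr {Ω : Type*} [Fintype Ω] (P : Ω → ℝ) (A : Ω → Prop) : ℝ :=
  ∑ ω, if A ω then P ω else 0

noncomputable def expec {Ω : Type*} [Fintype Ω] (P : Ω → ℝ) (f : Ω → ℝ) : ℝ :=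
  ∑ ω, P ω * f ω

noncomputable def cexp {Ω : Type*} [Fintype Ω] (P : Ω → ℝ) (f : Ω → ℝ) (A : Ω → Prop) : ℝ :=
  (∑ ω, if A ω then P ω * f ω else 0) / pr P A

/-- `expecOn P A f` is the partial expectation `E[f; A] = E[f · 1_A]`. -/
noncomputable def expecOn {Ω : Type*} [Fintype Ω] (P : Ω → ℝ) (A : Ω → Prop) (f : Ω → ℝ) : ℝ :=
  ∑ ω, if A ω then P ω * f ω else 0

namespace expecOn

variable {Ω : Type*} [Fintype Ω] (P : Ω → ℝ)

theorem congr {A : Ω → Prop} {f g : Ω → ℝ} (h : ∀ ω, A ω → f ω = g ω) :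
    expecOn P A f = expecOn P A g :=
  sum_congr rfl fun ω _ => by by_cases hA : A ω <;> simp [hA, h]

theorem const (A : Ω → Prop) (c : ℝ) : expecOn P A (fun _ => c) = c * pr P A := by
  simp only [expecOn, pr, mul_sum, mul_ite, mul_zero]
  exact sum_congr rfl fun ω _ => by rw [mul_comm]

theorem sub (A : Ω → Prop) (f g : Ω → ℝ) :
    expecOn P A (fun ω => f ω - g ω) = expecOn P A f - expecOn P A g := by
  simp only [expecOn, ← sum_sub_distrib]
  exact sum_congr rfl fun ω _ => by split_ifs <;> ring

theorem sub_const_div (A : Ω → Prop) (f : Ω → ℝ) (c d : ℝ) :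
    expecOn P A (fun ω => (f ω - c) / d) = (expecOn P A f - c * pr P A) / d := by
  rw [← const, ← sub]
  simp only [expecOn, sum_div]
  exact sum_congr rfl fun ω _ => by split_ifs <;> ring

theorem eq_and_of_forall_eq_ite {A B : Ω → Prop} {f g : Ω → ℝ}
    (h : ∀ ω, B ω → f ω = if A ω then g ω else 0) :
    expecOn P B f = expecOn P (fun ω => A ω ∧ B ω) g :=
  sum_congr rfl fun ω _ => by by_cases hB : B ω <;> by_cases hA : A ω <;> simp [hA, hB, h ω]

end expecOn

section Stratification

variable {Ω 𝒳 : Type*} [Fintype Ω]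

theorem expec_eq_sum_expecOn [Fintype 𝒳] (P : Ω → ℝ) (X : Ω → 𝒳) (f : Ω → ℝ) :
    expec P f = ∑ x, expecOn P (fun ω => X ω = x) f := by
  simp only [expec, expecOn, sum_comm (γ := 𝒳), sum_ite_eq, mem_univ, if_true]

theorem pr_nonneg {P : Ω → ℝ} (hP : ∀ ω, 0 ≤ P ω) (A : Ω → Prop) : 0 ≤ pr P A :=
  sum_nonneg fun ω _ => by split_ifs <;> simp [hP ω]

theorem expecOn_eq_zero_of_pr_eq_zero {P : Ω → ℝ} (hP : ∀ ω, 0 ≤ P ω) {A : Ω → Prop}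
    (hA : pr P A = 0) (f : Ω → ℝ) : expecOn P A f = 0 := by
  have hzero := (sum_eq_zero_iff_of_nonneg fun ω _ => by split_ifs <;> simp [hP ω]).mp hA
  exact sum_eq_zero fun ω hω => by split_ifs with h <;> simp [by simpa [h] using hzero ω hω]

theorem expecOn_comp_eq_sum_pr {β : Type*} (P : Ω → ℝ) (A : Ω → Prop) (W : Ω → β) (g : β → ℝ) :
    expecOn P A (fun ω => g (W ω)) = ∑ v ∈ univ.image W, g v * pr P (fun ω => W ω = v ∧ A ω) := by
  rw [expecOn, ← sum_fiberwise_of_maps_to (g := W) (t := univ.image W)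
    fun ω _ => mem_image_of_mem W (mem_univ ω)]
  refine sum_congr rfl fun v _ => ?_
  rw [pr, mul_sum, sum_filter]
  exact sum_congr rfl fun ω _ => by
    by_cases hW : W ω = v <;> by_cases hA : A ω <;> simp [hW, hA, mul_comm]

theorem expecOn_mul_pr_eq_of_indep {β : Type*} (P : Ω → ℝ) (A B : Ω → Prop) (W : Ω → β)
    (hindep : ∀ v, pr P (fun ω => W ω = v ∧ A ω) * pr P B = pr P (fun ω => W ω = v ∧ B ω) * pr P A)
    (g : β → ℝ) :
    expecOn P A (fun ω => g (W ω)) * pr P B = expecOn P B (fun ω => g (W ω)) * pr P A := by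
  simp only [expecOn_comp_eq_sum_pr, sum_mul, mul_assoc, hindep]

theorem pr_eq_one_and_add_pr_eq_zero_and {P : Ω → ℝ} {Z : Ω → ℝ} (hZ : ∀ ω, Z ω = 0 ∨ Z ω = 1)
    (B : Ω → Prop) : pr P (fun ω => Z ω = 1 ∧ B ω) + pr P (fun ω => Z ω = 0 ∧ B ω) = pr P B := by
  rw [pr, pr, pr, ← sum_add_distrib]
  exact sum_congr rfl fun ω _ => by rcases hZ ω with h | h <;> simp [h]

/-- One arm of the AIPW functional on a stratum of mass `p`: `q` is the mass of the arm, `a` and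
`b` the partial expectations of its potential outcome on the stratum and on the arm, `m` the
outcome model and `w` the working propensity of the arm. -/
theorem ipw_arm_eq {p q a b m w : ℝ} (hp : p ≠ 0) (hb : b * p = a * q)
    (h : (w = q / p ∧ q ≠ 0) ∨ m = a / p) : m * p + (b - m * q) / w = a := by
  rcases h with ⟨rfl, hq⟩ | rfl
  · field_simp
    linear_combination hb
  · have hmatch : b - a / p * q = 0 := by
      rw [div_mul_eq_mul_div, ← hb, mul_div_cancel_right₀ _ hp, sub_self]
    rw [hmatch, zero_div, add_zero, div_mul_cancel₀ _ hp]

theorem arm_weights_of_eq_div {p q₁ q₀ w : ℝ} (hp : p ≠ 0) (hq : q₁ + q₀ = p)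
    (hw : w = q₁ / p) (hw0 : 0 < w) (hw1 : w < 1) :
    (w = q₁ / p ∧ q₁ ≠ 0) ∧ (1 - w = q₀ / p ∧ q₀ ≠ 0) := by
  have hq₀ : q₀ = p - q₁ := by linarith
  refine ⟨⟨hw, fun h => by simp [hw, h] at hw0⟩, ?_, fun h => ?_⟩
  · rw [hw, hq₀, sub_div, div_self hp]
  · rw [hw, show q₁ = p by linarith, div_self hp] at hw1
    exact hw1.false

theorem aipw_stratum_eq {P : Ω → ℝ} (hP : ∀ ω, 0 ≤ P ω) {X : Ω → 𝒳} {Z Y1 Y0 Y : Ω → ℝ}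
    (hZ : ∀ ω, Z ω = 0 ∨ Z ω = 1)
    (consistency : ∀ ω, Y ω = Z ω * Y1 ω + (1 - Z ω) * Y0 ω)
    (ignorability : ∀ (x : 𝒳) (z y1 y0 : ℝ),
      pr P (fun ω => Y1 ω = y1 ∧ Y0 ω = y0 ∧ Z ω = z ∧ X ω = x) * pr P (fun ω => X ω = x)
        = pr P (fun ω => Y1 ω = y1 ∧ Y0 ω = y0 ∧ X ω = x)
            * pr P (fun ω => Z ω = z ∧ X ω = x))
    (μ1 μ0 eHat : 𝒳 → ℝ) (x : 𝒳)
    (hDR : 0 < pr P (fun ω => X ω = x) →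
      (eHat x = pr P (fun ω => Z ω = 1 ∧ X ω = x) / pr P (fun ω => X ω = x)
          ∧ 0 < eHat x ∧ eHat x < 1) ∨
      (μ1 x = cexp P Y1 (fun ω => X ω = x) ∧ μ0 x = cexp P Y0 (fun ω => X ω = x))) :
    expecOn P (fun ω => X ω = x) (fun ω => μ1 (X ω) - μ0 (X ω))
      + expecOn P (fun ω => X ω = x) (fun ω => Z ω * (Y ω - μ1 (X ω)) / eHat (X ω))
      - expecOn P (fun ω => X ω = x) (fun ω => (1 - Z ω) * (Y ω - μ0 (X ω)) / (1 - eHat (X ω)))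
      = expecOn P (fun ω => X ω = x) (fun ω => Y1 ω - Y0 ω) := by
  rcases (pr_nonneg hP fun ω => X ω = x).eq_or_lt with hp0 | hp
  · simp only [expecOn_eq_zero_of_pr_eq_zero hP hp0.symm, add_zero, sub_zero]
  set p := pr P (fun ω => X ω = x)
  have hbalance (z : ℝ) (g : ℝ × ℝ → ℝ) :
      expecOn P (fun ω => Z ω = z ∧ X ω = x) (fun ω => g (Y1 ω, Y0 ω)) * p
        = expecOn P (fun ω => X ω = x) (fun ω => g (Y1 ω, Y0 ω))
            * pr P (fun ω => Z ω = z ∧ X ω = x) :=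
    expecOn_mul_pr_eq_of_indep P _ _ (fun ω => (Y1 ω, Y0 ω))
      (fun v => by simpa only [Prod.ext_iff, and_assoc] using ignorability x z v.1 v.2) g
  have hq := pr_eq_one_and_add_pr_eq_zero_and (P := P) hZ (fun ω => X ω = x)
  have houtcome : expecOn P (fun ω => X ω = x) (fun ω => μ1 (X ω) - μ0 (X ω))
      = μ1 x * p - μ0 x * p := by
    rw [expecOn.congr P (g := fun _ => μ1 x - μ0 x) fun ω hω => by rw [hω], expecOn.const, sub_mul]
  have htreated : expecOn P (fun ω => X ω = x) (fun ω => Z ω * (Y ω - μ1 (X ω)) / eHat (X ω))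
      = (expecOn P (fun ω => Z ω = 1 ∧ X ω = x) Y1
          - μ1 x * pr P (fun ω => Z ω = 1 ∧ X ω = x)) / eHat x := by
    rw [← expecOn.sub_const_div]
    refine expecOn.eq_and_of_forall_eq_ite P fun ω hω => ?_
    rcases hZ ω with h | h <;> simp [h, hω, consistency ω]
  have hcontrol : expecOn P (fun ω => X ω = x)
        (fun ω => (1 - Z ω) * (Y ω - μ0 (X ω)) / (1 - eHat (X ω)))
      = (expecOn P (fun ω => Z ω = 0 ∧ X ω = x) Y0
          - μ0 x * pr P (fun ω => Z ω = 0 ∧ X ω = x)) / (1 - eHat x) := by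
    rw [← expecOn.sub_const_div]
    refine expecOn.eq_and_of_forall_eq_ite P fun ω hω => ?_
    rcases hZ ω with h | h <;> simp [h, hω, consistency ω]
  have hcases : ((eHat x = pr P (fun ω => Z ω = 1 ∧ X ω = x) / p
          ∧ pr P (fun ω => Z ω = 1 ∧ X ω = x) ≠ 0)
        ∧ (1 - eHat x = pr P (fun ω => Z ω = 0 ∧ X ω = x) / p
          ∧ pr P (fun ω => Z ω = 0 ∧ X ω = x) ≠ 0))
      ∨ (μ1 x = expecOn P (fun ω => X ω = x) Y1 / p
          ∧ μ0 x = expecOn P (fun ω => X ω = x) Y0 / p) := by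
    exact (hDR hp).imp (fun ⟨he, he0, he1⟩ => arm_weights_of_eq_div hp.ne' hq he he0 he1) id
  have harm1 := ipw_arm_eq hp.ne' (hbalance 1 Prod.fst) (hcases.imp And.left And.left)
  have harm0 := ipw_arm_eq hp.ne' (hbalance 0 Prod.snd) (hcases.imp And.right And.right)
  rw [houtcome, htreated, hcontrol, expecOn.sub]
  linear_combination harm1 - harm0

end Stratification

theorem aipw_double_robustness_general {Ω 𝒳 : Type*} [Fintype Ω] [Fintype 𝒳]
    (P : Ω → ℝ) (hP : ∀ ω, 0 ≤ P ω)
    (X : Ω → 𝒳) (Z : Ω → ℝ) (Y1 Y0 Y : Ω → ℝ)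
    (hZ : ∀ ω, Z ω = 0 ∨ Z ω = 1)
    (consistency : ∀ ω, Y ω = Z ω * Y1 ω + (1 - Z ω) * Y0 ω)
    (e : 𝒳 → ℝ)
    (he : ∀ x, e x = pr P (fun ω => Z ω = 1 ∧ X ω = x) / pr P (fun ω => X ω = x))
    (ignorability : ∀ (x : 𝒳) (z y1 y0 : ℝ),
      pr P (fun ω => Y1 ω = y1 ∧ Y0 ω = y0 ∧ Z ω = z ∧ X ω = x) * pr P (fun ω => X ω = x)
        = pr P (fun ω => Y1 ω = y1 ∧ Y0 ω = y0 ∧ X ω = x)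
            * pr P (fun ω => Z ω = z ∧ X ω = x))
    (μ1 μ0 : 𝒳 → ℝ) (eHat : 𝒳 → ℝ)
    (hDR :
      (∀ x : 𝒳, 0 < pr P (fun ω => X ω = x) → eHat x = e x ∧ 0 < e x ∧ e x < 1) ∨
      (∀ x : 𝒳, 0 < pr P (fun ω => X ω = x) →
        μ1 x = cexp P Y1 (fun ω => X ω = x) ∧ μ0 x = cexp P Y0 (fun ω => X ω = x))) :
    expec P (fun ω => μ1 (X ω) - μ0 (X ω))
      + expec P (fun ω => Z ω * (Y ω - μ1 (X ω)) / eHat (X ω))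
      - expec P (fun ω => (1 - Z ω) * (Y ω - μ0 (X ω)) / (1 - eHat (X ω)))
      = expec P (fun ω => Y1 ω - Y0 ω) := by
  simp only [expec_eq_sum_expecOn P X, ← sum_add_distrib, ← sum_sub_distrib]
  refine sum_congr rfl fun x _ =>
    aipw_stratum_eq hP hZ consistency ignorability μ1 μ0 eHat x fun hp => ?_
  rcases hDR with hprop | hout
  · obtain ⟨hhat, he0, he1⟩ := hprop x hp
    exact .inl ⟨hhat.trans (he x), hhat ▸ he0, hhat ▸ he1⟩
  · exact .inr (hout x hp)

/-- Full double robustness of AIPW: the AIPW functional recovers the ATE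
if either the working propensity equals the true propensity, or the outcome models are
the true conditional potential-outcome means. -/
theorem aipw_double_robustness {Ω 𝒳 : Type*} [Fintype Ω] [Fintype 𝒳]
    (P : Ω → ℝ) (hP : ∀ ω, 0 ≤ P ω) (hP1 : ∑ ω, P ω = 1)
    (X : Ω → 𝒳) (Z : Ω → ℝ) (Y1 Y0 Y : Ω → ℝ)
    (hZ : ∀ ω, Z ω = 0 ∨ Z ω = 1)
    (consistency : ∀ ω, Y ω = Z ω * Y1 ω + (1 - Z ω) * Y0 ω)
    (e : 𝒳 → ℝ)
    (he : ∀ x, e x = pr P (fun ω => Z ω = 1 ∧ X ω = x) / pr P (fun ω => X ω = x))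
    (ignorability : ∀ (x : 𝒳) (z y1 y0 : ℝ),
      pr P (fun ω => Y1 ω = y1 ∧ Y0 ω = y0 ∧ Z ω = z ∧ X ω = x) * pr P (fun ω => X ω = x)
        = pr P (fun ω => Y1 ω = y1 ∧ Y0 ω = y0 ∧ X ω = x)
            * pr P (fun ω => Z ω = z ∧ X ω = x))
    (μ1 μ0 : 𝒳 → ℝ) (eHat : 𝒳 → ℝ)
    (hOverlapHat : ∀ x : 𝒳, 0 < pr P (fun ω => X ω = x) → 0 < eHat x ∧ eHat x < 1)
    (hDR :
      (∀ x : 𝒳, 0 < pr P (fun ω => X ω = x) → eHat x = e x ∧ 0 < e x ∧ e x < 1) ∨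
      (∀ x : 𝒳, 0 < pr P (fun ω => X ω = x) →
        μ1 x = cexp P Y1 (fun ω => X ω = x) ∧ μ0 x = cexp P Y0 (fun ω => X ω = x))) :
    expec P (fun ω => μ1 (X ω) - μ0 (X ω))
      + expec P (fun ω => Z ω * (Y ω - μ1 (X ω)) / eHat (X ω))
      - expec P (fun ω => (1 - Z ω) * (Y ω - μ0 (X ω)) / (1 - eHat (X ω)))
      = expec P (fun ω => Y1 ω - Y0 ω) :=
  aipw_double_robustness_general P hP X Z Y1 Y0 Y hZ consistency e he ignorability μ1 μ0 eHat hDR
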